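/- For any continuous f : Ω → ℂ and 1 ≤ λ < ∞: ‖f‖_∞ ≥ sup_{‖g‖_λ=1} ‖f·(g∘σ)‖_λ ≥ ‖Lf‖_∞, where L is the Ruelle operator; and if f does not depend on the first coordinate (f = h∘σ for some continuous h), all inequalities are equalities. -/

import Mathlib

open MeasureTheory ENNReal

noncomputable section

/-- The shift map on `Ω = {0,1}^ℕ`. -/
def shift (x : ℕ → Bool) : ℕ → Bool := fun n => x (n + 1)

/-- Prepending a symbol: `cons b x = bx`. -/
def cons (b : Bool) (x : ℕ → Bool) : ℕ → Bool := fun n => Nat.casesOn n b x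

/-- The Ruelle operator `L g (x) = (g(0x) + g(1x))/2`. -/
def Ruelle (g : (ℕ → Bool) → ℂ) : (ℕ → Bool) → ℂ :=
  fun x => (g (cons false x) + g (cons true x)) / 2

/-- `μ` is the Bernoulli(1/2,1/2) product measure on `{0,1}^ℕ`. -/
def IsBernoulliHalf (μ : Measure (ℕ → Bool)) : Prop :=
  ∀ (s : Finset ℕ) (b : ℕ → Bool),
    μ {x | ∀ i ∈ s, x i = b i} = (1 / 2 : ℝ≥0∞) ^ s.card

lemma shift_cons (b : Bool) (x : ℕ → Bool) : shift (cons b x) = x := rfl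

lemma measurable_shift : Measurable shift := by
  rw [measurable_pi_iff]; intro n; exact measurable_pi_apply _

lemma continuous_shift : Continuous shift := by
  apply continuous_pi; intro n; exact continuous_apply (n + 1)

lemma continuous_cons (b : Bool) : Continuous (cons b) := by
  apply continuous_pi; intro n
  cases n with
  | zero => exact continuous_const
  | succ m => exact continuous_apply m

lemma measurable_cons (b : Bool) : Measurable (cons b) :=
  (continuous_cons b).measurable

lemma measurable_cons2 : Measurable (fun p : Bool × (ℕ → Bool) => cons p.1 p.2) := by
  rw [measurable_pi_iff]; intro n
  cases n with
  | zero => exact measurable_fst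
  | succ m => exact (measurable_pi_apply m).comp measurable_snd

lemma continuous_Ruelle {f : (ℕ → Bool) → ℂ} (hf : Continuous f) :
    Continuous (Ruelle f) := by
  unfold Ruelle
  exact ((hf.comp (continuous_cons false)).add (hf.comp (continuous_cons true))).div_const 2

/-- cylinder sets -/
def Cyl : Set (Set (ℕ → Bool)) :=
  {S | ∃ (s : Finset ℕ) (b : ℕ → Bool), S = {x | ∀ i ∈ s, x i = b i}}

lemma measurableSet_cyl (s : Finset ℕ) (b : ℕ → Bool) :
    MeasurableSet {x : ℕ → Bool | ∀ i ∈ s, x i = b i} := by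
  have : {x : ℕ → Bool | ∀ i ∈ s, x i = b i} = ⋂ i ∈ s, {x | x i = b i} := by
    ext x; simp
  rw [this]
  refine MeasurableSet.biInter s.countable_toSet (fun i _ => ?_)
  have : {x : ℕ → Bool | x i = b i} = (fun x : ℕ → Bool => x i) ⁻¹' {b i} := rfl
  rw [this]
  exact (measurable_pi_apply i) (MeasurableSet.singleton (b i))

lemma isPiSystem_cyl : IsPiSystem Cyl := by
  rintro S ⟨s, b, rfl⟩ T ⟨t, c, rfl⟩ ⟨x₀, hx₀⟩
  refine ⟨s ∪ t, x₀, ?_⟩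
  obtain ⟨h1, h2⟩ := hx₀
  ext x
  simp only [Set.mem_inter_iff, Set.mem_setOf_eq, Finset.mem_union]
  constructor
  · rintro ⟨hs, ht⟩ i (hi | hi)
    · rw [hs i hi, h1 i hi]
    · rw [ht i hi, h2 i hi]
  · intro h
    exact ⟨fun i hi => (h i (Or.inl hi)).trans (h1 i hi),
           fun i hi => (h i (Or.inr hi)).trans (h2 i hi)⟩

lemma generateFrom_cyl : (by infer_instance : MeasurableSpace (ℕ → Bool)) =
    MeasurableSpace.generateFrom Cyl := by
  apply le_antisymm
  · refine iSup_le fun i => ?_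
    rw [MeasurableSpace.comap_le_iff_le_map]
    intro S _
    rw [MeasurableSpace.map_def]
    -- S : Set Bool, preimage of eval i
    have : (fun x : ℕ → Bool => x i) ⁻¹' S = ⋃ b ∈ S, {x : ℕ → Bool | ∀ j ∈ ({i} : Finset ℕ), x j = b} := by
      ext x
      simp only [Set.mem_preimage, Set.mem_iUnion, Set.mem_setOf_eq, Finset.mem_singleton,
        exists_prop]
      constructor
      · intro h; exact ⟨x i, h, fun j hj => by rw [hj]⟩
      · rintro ⟨b, hb, h⟩; rw [h i rfl]; exact hb
    rw [this]
    refine MeasurableSet.biUnion S.to_countable fun b _ =>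
      MeasurableSpace.measurableSet_generateFrom ⟨{i}, fun _ => b, rfl⟩
  · rw [MeasurableSpace.generateFrom_le_iff]
    rintro S ⟨s, b, rfl⟩
    exact measurableSet_cyl s b

/-- fair coin -/
def coin : Measure Bool := (2⁻¹ : ℝ≥0∞) • (Measure.dirac false + Measure.dirac true)

instance : IsProbabilityMeasure coin := by
  constructor
  simp [coin]
  rw [← two_mul, ENNReal.mul_inv_cancel] <;> norm_num

lemma coin_apply (S : Set Bool) :
    coin S = 2⁻¹ * (S.indicator 1 false + S.indicator 1 true) := by
  simp [coin, Measure.dirac_apply', mul_add]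

lemma lintegral_coin (k : Bool → ℝ≥0∞) : ∫⁻ b, k b ∂coin = 2⁻¹ * (k false + k true) := by
  simp [coin, lintegral_smul_measure, lintegral_add_measure, lintegral_dirac, mul_add]

section Key
variable {μ : Measure (ℕ → Bool)} (hprob : IsProbabilityMeasure μ) (hμ : IsBernoulliHalf μ)

/-- the measure of a cylinder under the pushforward -/
lemma map_cons_eq (hprob : IsProbabilityMeasure μ) (hμ : IsBernoulliHalf μ) :
    Measure.map (fun p : Bool × (ℕ → Bool) => cons p.1 p.2) (coin.prod μ) = μ := by
  have hmap : IsProbabilityMeasure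
      (Measure.map (fun p : Bool × (ℕ → Bool) => cons p.1 p.2) (coin.prod μ)) :=
    Measure.isProbabilityMeasure_map measurable_cons2.aemeasurable
  refine (ext_of_generate_finite Cyl generateFrom_cyl isPiSystem_cyl ?_ (by simp)).symm
  rintro S ⟨s, b, rfl⟩
  rw [Measure.map_apply measurable_cons2 (measurableSet_cyl s b)]
  -- preimage is a product set
  set s' : Finset ℕ := (s.erase 0).image Nat.pred with hs'
  have hmem : ∀ j : ℕ, j ∈ s' ↔ j + 1 ∈ s := by
    intro j
    simp only [hs', Finset.mem_image, Finset.mem_erase]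
    constructor
    · rintro ⟨k, ⟨hk0, hks⟩, rfl⟩
      have hk : k.pred + 1 = k := Nat.succ_pred_eq_of_pos (Nat.pos_of_ne_zero hk0)
      rwa [hk]
    · intro h; exact ⟨j + 1, ⟨Nat.succ_ne_zero j, h⟩, rfl⟩
  have hpre : (fun p : Bool × (ℕ → Bool) => cons p.1 p.2) ⁻¹' {x | ∀ i ∈ s, x i = b i} =
      {c : Bool | 0 ∈ s → c = b 0} ×ˢ {y | ∀ j ∈ s', y j = b (j + 1)} := by
    ext ⟨c, y⟩
    simp only [Set.mem_preimage, Set.mem_setOf_eq, Set.mem_prod]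
    constructor
    · intro h
      refine ⟨fun h0 => h 0 h0, fun j hj => h (j + 1) ((hmem j).1 hj)⟩
    · rintro ⟨h0, hy⟩ i hi
      cases i with
      | zero => exact h0 hi
      | succ m => exact hy m ((hmem m).2 hi)
    -- note: cons c y 0 = c, cons c y (m+1) = y m definitionally
  rw [hpre, Measure.prod_prod, hμ s' (fun j => b (j + 1))]
  -- cardinality bookkeeping
  have hcard : s'.card = (s.erase 0).card := by
    apply Finset.card_image_of_injOn
    intro a ha a' ha' h
    simp only [Finset.mem_coe, Finset.mem_erase] at ha ha'
    simp only [Nat.pred_eq_sub_one] at h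
    omega
  by_cases h0 : 0 ∈ s
  · have : {c : Bool | 0 ∈ s → c = b 0} = {b 0} := by
      ext c; simp [h0]
    rw [this]
    have hc : coin {b 0} = 2⁻¹ := by
      rw [coin_apply]
      cases b 0 <;> simp [Set.indicator]
    rw [hc, hcard, Finset.card_erase_of_mem h0, hμ s b, one_div]
    have hv : s.card = (s.card - 1) + 1 := (Nat.succ_pred_eq_of_pos (Finset.card_pos.mpr ⟨0, h0⟩)).symm
    rw [hv, pow_succ]
    rw [Nat.add_sub_cancel]
    ring
  · have : {c : Bool | 0 ∈ s → c = b 0} = Set.univ := by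
      ext c; simp [h0]
    rw [this, measure_univ, one_mul, hcard, Finset.erase_eq_of_notMem h0]
    exact hμ s b

/-- Lemma B : decomposition of the integral -/
lemma lintegral_cons (hprob : IsProbabilityMeasure μ) (hμ : IsBernoulliHalf μ)
    {h : (ℕ → Bool) → ℝ≥0∞} (hm : Measurable h) :
    ∫⁻ x, h x ∂μ =
      2⁻¹ * (∫⁻ y, h (cons false y) ∂μ + ∫⁻ y, h (cons true y) ∂μ) := by
  conv_lhs => rw [← map_cons_eq hprob hμ]
  rw [lintegral_map hm measurable_cons2]
  rw [lintegral_prod _ (show AEMeasurable (fun z : Bool × (ℕ → Bool) => h (cons z.1 z.2))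
    (coin.prod μ) from (hm.comp measurable_cons2).aemeasurable)]
  rw [lintegral_coin]

lemma measure_cons (hprob : IsProbabilityMeasure μ) (hμ : IsBernoulliHalf μ)
    {S : Set (ℕ → Bool)} (hS : MeasurableSet S) :
    μ S = 2⁻¹ * (μ (cons false ⁻¹' S) + μ (cons true ⁻¹' S)) := by
  have key := lintegral_cons hprob hμ (h := S.indicator 1) ((measurable_const).indicator hS)
  have h1 : ∀ b : Bool, (fun y => S.indicator (1 : (ℕ → Bool) → ℝ≥0∞) (cons b y)) =
      (cons b ⁻¹' S).indicator 1 := by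
    intro b; ext y
    by_cases h : cons b y ∈ S <;> simp [Set.indicator_apply, h, Set.mem_preimage]
  rw [lintegral_indicator_one hS] at key
  simp only [h1 false, h1 true] at key
  rw [lintegral_indicator_one (measurable_cons false hS),
    lintegral_indicator_one (measurable_cons true hS)] at key
  exact key

lemma measurePreserving_shift (hprob : IsProbabilityMeasure μ) (hμ : IsBernoulliHalf μ) :
    MeasurePreserving shift μ μ := by
  refine ⟨measurable_shift, ?_⟩
  ext S hS
  rw [Measure.map_apply measurable_shift hS]
  rw [measure_cons hprob hμ (measurable_shift hS)]
  have h1 : cons false ⁻¹' (shift ⁻¹' S) = S := by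
    ext y; simp [Set.mem_preimage, shift_cons]
  have h2 : cons true ⁻¹' (shift ⁻¹' S) = S := by
    ext y; simp [Set.mem_preimage, shift_cons]
  rw [h1, h2, ← two_mul, ← mul_assoc, ENNReal.inv_mul_cancel (by norm_num) (by norm_num), one_mul]

end Key

lemma exists_cylinder_subset {U : Set (ℕ → Bool)} (hU : IsOpen U) {x₀ : ℕ → Bool}
    (hx : x₀ ∈ U) : ∃ n : ℕ, {y : ℕ → Bool | ∀ i < n, y i = x₀ i} ⊆ U := by
  obtain ⟨S, hSmem, hxS, hSU⟩ :=
    (isTopologicalBasis_pi (fun _ : ℕ => isTopologicalBasis_singletons Bool)).exists_subset_of_mem_open hx hU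
  obtain ⟨V, F, hVT, rfl⟩ := hSmem
  classical
  obtain ⟨n, hn⟩ : ∃ n : ℕ, ∀ i ∈ F, i < n := ⟨(F.sup id) + 1, fun i hi =>
    Nat.lt_succ_of_le (Finset.le_sup (f := id) hi)⟩
  refine ⟨n, fun y hy => hSU ?_⟩
  intro i hi
  obtain ⟨v, hv⟩ := hVT i hi
  have hx₀i : x₀ i ∈ V i := hxS i hi
  rw [hv] at hx₀i ⊢
  rw [hy i (hn i hi)]
  exact hx₀i

section Main
variable {μ : Measure (ℕ → Bool)}

lemma part1 (hprob : IsProbabilityMeasure μ) (hμ : IsBernoulliHalf μ)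
    {f : (ℕ → Bool) → ℂ} (hf : Continuous f) {lam : ℝ} (hlam : 1 ≤ lam) :
    sSup {E : ℝ≥0∞ | ∃ g : (ℕ → Bool) → ℂ, AEStronglyMeasurable g μ ∧
          eLpNorm g (ENNReal.ofReal lam) μ = 1 ∧
          E = eLpNorm (fun x => f x * g (shift x)) (ENNReal.ofReal lam) μ} ≤
        ENNReal.ofReal (⨆ x : ℕ → Bool, ‖f x‖) := by
  set M : ℝ := ⨆ x : ℕ → Bool, ‖f x‖ with hM
  have hbdd : BddAbove (Set.range fun x : ℕ → Bool => ‖f x‖) :=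
    (isCompact_range hf.norm).bddAbove
  have hMle : ∀ x, ‖f x‖ ≤ M := fun x => le_ciSup hbdd x
  have hM0 : 0 ≤ M := le_trans (norm_nonneg _) (hMle (fun _ => false))
  refine sSup_le ?_
  rintro E ⟨g, hg, hg1, rfl⟩
  calc eLpNorm (fun x => f x * g (shift x)) (ENNReal.ofReal lam) μ
      ≤ eLpNorm (fun x => (M : ℂ) * g (shift x)) (ENNReal.ofReal lam) μ := by
        refine eLpNorm_mono fun x => ?_
        rw [norm_mul, norm_mul, Complex.norm_real, Real.norm_of_nonneg hM0]
        exact mul_le_mul_of_nonneg_right (hMle x) (norm_nonneg _)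
    _ = (‖(M : ℂ)‖₊ : ℝ≥0∞) * eLpNorm (fun x => g (shift x)) (ENNReal.ofReal lam) μ := by
        have := eLpNorm_const_smul (M : ℂ) (fun x => g (shift x)) (ENNReal.ofReal lam) μ
        rw [← enorm_eq_nnnorm]; exact this
    _ = ENNReal.ofReal M * eLpNorm (g ∘ shift) (ENNReal.ofReal lam) μ := by
        congr 1
        rw [Complex.nnnorm_real, ← enorm_eq_nnnorm, ← ofReal_norm, Real.norm_of_nonneg hM0]
    _ = ENNReal.ofReal M := by
        rw [eLpNorm_comp_measurePreserving hg (measurePreserving_shift hprob hμ), hg1, mul_one]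

lemma part2 (hprob : IsProbabilityMeasure μ) (hμ : IsBernoulliHalf μ)
    {f : (ℕ → Bool) → ℂ} (hf : Continuous f) {lam : ℝ} (hlam : 1 ≤ lam) :
    ENNReal.ofReal (⨆ x : ℕ → Bool, ‖Ruelle f x‖) ≤
      sSup {E : ℝ≥0∞ | ∃ g : (ℕ → Bool) → ℂ, AEStronglyMeasurable g μ ∧
          eLpNorm g (ENNReal.ofReal lam) μ = 1 ∧
          E = eLpNorm (fun x => f x * g (shift x)) (ENNReal.ofReal lam) μ} := by
  classical
  have hlam0 : (0 : ℝ) < lam := lt_of_lt_of_le one_pos hlam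
  set p : ℝ≥0∞ := ENNReal.ofReal lam with hp
  have hp0 : p ≠ 0 := (ENNReal.ofReal_pos.mpr hlam0).ne'
  have hptop : p ≠ ∞ := ENNReal.ofReal_ne_top
  have htR : p.toReal = lam := ENNReal.toReal_ofReal hlam0.le
  have hRc : Continuous (Ruelle f) := continuous_Ruelle hf
  obtain ⟨x₀, -, hx₀'⟩ := isCompact_univ.exists_isMaxOn (Set.univ_nonempty) hRc.norm.continuousOn
  have hx₀ : ∀ y, ‖Ruelle f y‖ ≤ ‖Ruelle f x₀‖ := fun y => hx₀' (Set.mem_univ y)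
  have hbdd : BddAbove (Set.range fun x : ℕ → Bool => ‖Ruelle f x‖) :=
    (isCompact_range hRc.norm).bddAbove
  have hsup_eq : (⨆ x : ℕ → Bool, ‖Ruelle f x‖) = ‖Ruelle f x₀‖ :=
    le_antisymm (ciSup_le hx₀) (le_ciSup hbdd x₀)
  rw [hsup_eq]
  refine ENNReal.le_of_forall_pos_le_add fun ε hε _ => ?_
  have hε' : (0 : ℝ) < (ε : ℝ) := hε
  -- find a cylinder where ‖Ruelle f‖ is large
  set r : ℝ := ‖Ruelle f x₀‖ - ε with hr
  set U : Set (ℕ → Bool) := {y | r < ‖Ruelle f y‖} with hU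
  have hUopen : IsOpen U := isOpen_lt continuous_const hRc.norm
  have hx₀U : x₀ ∈ U := by simp only [hU, Set.mem_setOf_eq, hr]; linarith
  obtain ⟨n, hC⟩ := exists_cylinder_subset hUopen hx₀U
  set C : Set (ℕ → Bool) := {y | ∀ i < n, y i = x₀ i} with hCdef
  have hCyl : C = {y : ℕ → Bool | ∀ i ∈ Finset.range n, y i = x₀ i} := by
    simp [hCdef, Finset.mem_range]
  have hCmeas : MeasurableSet C := by rw [hCyl]; exact measurableSet_cyl _ _
  have hμC : μ C = 2⁻¹ ^ n := by
    rw [hCyl]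
    have := hμ (Finset.range n) x₀
    rwa [Finset.card_range, one_div] at this
  -- the test function
  set c : ℝ := 2 ^ ((n : ℝ) / lam) with hc
  have hc0 : 0 < c := Real.rpow_pos_of_pos two_pos _
  set g : (ℕ → Bool) → ℂ := C.indicator (fun _ => (c : ℂ)) with hg
  have hgm : Measurable g := measurable_const.indicator hCmeas
  have hqc : (‖(c : ℂ)‖₊ : ℝ≥0∞) = ENNReal.ofReal c := by
    rw [Complex.nnnorm_real, ← enorm_eq_nnnorm, ← ofReal_norm, Real.norm_of_nonneg hc0.le]
  have hkey : ENNReal.ofReal c * μ C ^ (1 / lam) = 1 := by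
    rw [hμC, hc, ← ENNReal.ofReal_rpow_of_pos two_pos]
    rw [← ENNReal.rpow_natCast (2⁻¹ : ℝ≥0∞) n, ← ENNReal.rpow_mul, mul_one_div]
    rw [ENNReal.inv_rpow, ENNReal.ofReal_ofNat]
    exact ENNReal.mul_inv_cancel (ENNReal.rpow_pos (by norm_num) (by norm_num)).ne'
      (ENNReal.rpow_ne_top_of_nonneg (by positivity) (by norm_num))
  have hnorm1 : eLpNorm g p μ = 1 := by
    rw [hg, eLpNorm_indicator_const hCmeas hp0 hptop, htR, enorm_eq_nnnorm, hqc, hkey]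
  -- the element of the set
  set E : ℝ≥0∞ := eLpNorm (fun x => f x * g (shift x)) p μ with hE
  have hmem : E ∈ {E : ℝ≥0∞ | ∃ g : (ℕ → Bool) → ℂ, AEStronglyMeasurable g μ ∧
      eLpNorm g (ENNReal.ofReal lam) μ = 1 ∧
      E = eLpNorm (fun x => f x * g (shift x)) (ENNReal.ofReal lam) μ} :=
    ⟨g, hgm.aestronglyMeasurable, hnorm1, rfl⟩
  -- lower bound for E
  have hEr : ENNReal.ofReal r ≤ E := by
    rcases le_or_gt r 0 with h0 | h0
    · simp [ENNReal.ofReal_eq_zero.mpr h0]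
    have em : Measurable fun x => (‖f x * g (shift x)‖₊ : ℝ≥0∞) ^ lam :=
      (ENNReal.continuous_rpow_const.measurable.comp
        ((hf.measurable.mul (hgm.comp measurable_shift)).nnnorm.coe_nnreal_ennreal))
    rw [hE, eLpNorm_eq_lintegral_rpow_enorm_toReal hp0 hptop, htR]; simp only [enorm_eq_nnnorm]
    set I : ℝ≥0∞ := ∫⁻ x, (‖f x * g (shift x)‖₊ : ℝ≥0∞) ^ lam ∂μ with hI
    have hAm : Measurable fun y => (‖f (cons false y) * g y‖₊ : ℝ≥0∞) ^ lam :=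
      (ENNReal.continuous_rpow_const.measurable.comp
        (((hf.measurable.comp (measurable_cons false)).mul hgm).nnnorm.coe_nnreal_ennreal))
    have hBm : Measurable fun y => (‖f (cons true y) * g y‖₊ : ℝ≥0∞) ^ lam :=
      (ENNReal.continuous_rpow_const.measurable.comp
        (((hf.measurable.comp (measurable_cons true)).mul hgm).nnnorm.coe_nnreal_ennreal))
    have hIeq : I = ∫⁻ y, 2⁻¹ * ((‖f (cons false y) * g y‖₊ : ℝ≥0∞) ^ lam
        + (‖f (cons true y) * g y‖₊ : ℝ≥0∞) ^ lam) ∂μ := by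
      rw [hI, lintegral_cons hprob hμ em]
      simp only [shift_cons]
      rw [← lintegral_add_left hAm, ← lintegral_const_mul 2⁻¹ (show Measurable (fun y => (‖f (cons false y) * g y‖₊ : ℝ≥0∞) ^ lam + (‖f (cons true y) * g y‖₊ : ℝ≥0∞) ^ lam) from hAm.add hBm)]
    have hIlb : (ENNReal.ofReal c * ENNReal.ofReal r) ^ lam * μ C ≤ I := by
      rw [hIeq, ← lintegral_indicator_const hCmeas]
      refine lintegral_mono fun y => ?_
      by_cases hy : y ∈ C
      · rw [Set.indicator_of_mem hy]
        have hgy : g y = (c : ℂ) := Set.indicator_of_mem hy _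
        rw [hgy]
        set a : ℝ≥0∞ := (‖f (cons false y)‖₊ : ℝ≥0∞) with ha
        set b : ℝ≥0∞ := (‖f (cons true y)‖₊ : ℝ≥0∞) with hb
        set q : ℝ≥0∞ := ENNReal.ofReal c with hq
        have hnorm_mul : ∀ u : ℂ, (‖u * (c : ℂ)‖₊ : ℝ≥0∞) = (‖u‖₊ : ℝ≥0∞) * q := by
          intro u; rw [nnnorm_mul, ENNReal.coe_mul, hqc]
        rw [hnorm_mul, hnorm_mul]
        rw [ENNReal.mul_rpow_of_nonneg _ _ hlam0.le, ENNReal.mul_rpow_of_nonneg _ _ hlam0.le,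
          ENNReal.mul_rpow_of_nonneg _ _ hlam0.le]
        -- goal : q^lam * (ofReal r)^lam ≤ 2⁻¹ * (a^lam * q^lam + b^lam * q^lam)
        have hmean : (2⁻¹ * a + 2⁻¹ * b) ^ lam ≤ 2⁻¹ * a ^ lam + 2⁻¹ * b ^ lam :=
          ENNReal.rpow_arith_mean_le_arith_mean2_rpow 2⁻¹ 2⁻¹ a b
            (by rw [← two_mul]; exact ENNReal.mul_inv_cancel (by norm_num) (by norm_num)) hlam
        have hrle : ENNReal.ofReal r ≤ 2⁻¹ * a + 2⁻¹ * b := by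
          have hry : r < ‖Ruelle f y‖ := hC hy
          have hRnorm : ‖Ruelle f y‖ = ‖f (cons false y) + f (cons true y)‖ / 2 := by
            rw [Ruelle, norm_div]
            norm_num
          have hreal : r ≤ 2⁻¹ * ‖f (cons false y)‖ + 2⁻¹ * ‖f (cons true y)‖ := by
            have := norm_add_le (f (cons false y)) (f (cons true y))
            rw [hRnorm] at hry
            linarith
          calc ENNReal.ofReal r
              ≤ ENNReal.ofReal (2⁻¹ * ‖f (cons false y)‖ + 2⁻¹ * ‖f (cons true y)‖) :=
                ENNReal.ofReal_le_ofReal hreal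
            _ = 2⁻¹ * a + 2⁻¹ * b := by
                rw [ENNReal.ofReal_add (by positivity) (by positivity),
                  ENNReal.ofReal_mul (by norm_num), ENNReal.ofReal_mul (by norm_num),
                  ofReal_norm, ofReal_norm, enorm_eq_nnnorm, enorm_eq_nnnorm]
                have h12 : ENNReal.ofReal (2⁻¹ : ℝ) = 2⁻¹ := by
                  rw [ENNReal.ofReal_inv_of_pos two_pos, ENNReal.ofReal_ofNat]
                rw [h12]
        calc q ^ lam * ENNReal.ofReal r ^ lam
            ≤ q ^ lam * (2⁻¹ * a + 2⁻¹ * b) ^ lam :=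
              mul_le_mul_right (ENNReal.rpow_le_rpow hrle hlam0.le) _
          _ ≤ q ^ lam * (2⁻¹ * a ^ lam + 2⁻¹ * b ^ lam) := mul_le_mul_right hmean _
          _ = 2⁻¹ * (a ^ lam * q ^ lam + b ^ lam * q ^ lam) := by ring
      · rw [Set.indicator_of_notMem hy]
        exact zero_le
    calc ENNReal.ofReal r
        = ENNReal.ofReal c * ENNReal.ofReal r * μ C ^ (1 / lam) := by
          conv_lhs => rw [← mul_one (ENNReal.ofReal r), ← hkey]
          ring
      _ = ((ENNReal.ofReal c * ENNReal.ofReal r) ^ lam * μ C) ^ (1 / lam) := by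
          rw [ENNReal.mul_rpow_of_nonneg _ _ (by positivity), ← ENNReal.rpow_mul,
            mul_one_div, div_self hlam0.ne', ENNReal.rpow_one]
      _ ≤ I ^ (1 / lam) := ENNReal.rpow_le_rpow hIlb (by positivity)
  -- conclude
  calc ENNReal.ofReal ‖Ruelle f x₀‖
      = ENNReal.ofReal (r + ε) := by rw [hr, sub_add_cancel]
    _ ≤ ENNReal.ofReal r + ENNReal.ofReal ε := ENNReal.ofReal_add_le
    _ ≤ sSup {E : ℝ≥0∞ | ∃ g : (ℕ → Bool) → ℂ, AEStronglyMeasurable g μ ∧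
          eLpNorm g (ENNReal.ofReal lam) μ = 1 ∧
          E = eLpNorm (fun x => f x * g (shift x)) (ENNReal.ofReal lam) μ} + ε := by
        refine add_le_add (le_trans hEr (le_sSup hmem)) ?_
        rw [ENNReal.ofReal_coe_nnreal]

end Main

theorem stmt6' (μ : Measure (ℕ → Bool)) (hprob : IsProbabilityMeasure μ)
    (hμ : IsBernoulliHalf μ) (f : (ℕ → Bool) → ℂ) (hf : Continuous f)
    (lam : ℝ) (hlam : 1 ≤ lam) :
    (sSup {E : ℝ≥0∞ | ∃ g : (ℕ → Bool) → ℂ, AEStronglyMeasurable g μ ∧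
          eLpNorm g (ENNReal.ofReal lam) μ = 1 ∧
          E = eLpNorm (fun x => f x * g (shift x)) (ENNReal.ofReal lam) μ} ≤
        ENNReal.ofReal (⨆ x : ℕ → Bool, ‖f x‖) ∧
      ENNReal.ofReal (⨆ x : ℕ → Bool, ‖Ruelle f x‖) ≤
        sSup {E : ℝ≥0∞ | ∃ g : (ℕ → Bool) → ℂ, AEStronglyMeasurable g μ ∧
          eLpNorm g (ENNReal.ofReal lam) μ = 1 ∧
          E = eLpNorm (fun x => f x * g (shift x)) (ENNReal.ofReal lam) μ}) ∧
      ((∃ h : (ℕ → Bool) → ℂ, Continuous h ∧ f = fun x => h (shift x)) →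
        sSup {E : ℝ≥0∞ | ∃ g : (ℕ → Bool) → ℂ, AEStronglyMeasurable g μ ∧
            eLpNorm g (ENNReal.ofReal lam) μ = 1 ∧
            E = eLpNorm (fun x => f x * g (shift x)) (ENNReal.ofReal lam) μ} =
          ENNReal.ofReal (⨆ x : ℕ → Bool, ‖f x‖) ∧
        ENNReal.ofReal (⨆ x : ℕ → Bool, ‖Ruelle f x‖) =
          ENNReal.ofReal (⨆ x : ℕ → Bool, ‖f x‖)) := by
  refine ⟨⟨part1 hprob hμ hf hlam, part2 hprob hμ hf hlam⟩, ?_⟩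
  rintro ⟨h, hh, rfl⟩
  have hRf : Ruelle (fun x => h (shift x)) = h := by
    funext x
    show (h (shift (cons false x)) + h (shift (cons true x))) / 2 = h x
    rw [shift_cons, shift_cons]
    ring
  have bddh : BddAbove (Set.range fun x : ℕ → Bool => ‖h x‖) :=
    (isCompact_range hh.norm).bddAbove
  have bddc : BddAbove (Set.range fun x : ℕ → Bool => ‖h (shift x)‖) :=
    (isCompact_range ((hh.comp continuous_shift).norm)).bddAbove
  have hsup : (⨆ x : ℕ → Bool, ‖h (shift x)‖) = ⨆ x : ℕ → Bool, ‖h x‖ := by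
    apply le_antisymm
    · exact ciSup_le fun x => le_ciSup bddh (shift x)
    · refine ciSup_le fun y => ?_
      have := le_ciSup bddc (cons true y)
      rwa [shift_cons] at this
  have e₂ : ENNReal.ofReal (⨆ x : ℕ → Bool, ‖Ruelle (fun x => h (shift x)) x‖) =
      ENNReal.ofReal (⨆ x : ℕ → Bool, ‖h (shift x)‖) := by
    rw [hRf, hsup]
  refine ⟨le_antisymm (part1 hprob hμ (hh.comp continuous_shift) hlam) ?_, e₂⟩
  rw [← e₂]
  exact part2 hprob hμ (hh.comp continuous_shift) hlam

/-- For continuous `f` and `1 ≤ λ < ∞`: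
`‖f‖_∞ ≥ sup_{‖g‖_λ = 1} ‖f · (g∘σ)‖_λ ≥ ‖L f‖_∞`; and if `f` does not depend on
the first coordinate (`f = h ∘ σ` for a continuous `h`), all are equalities. -/
theorem stmt6 (μ : Measure (ℕ → Bool)) (hprob : IsProbabilityMeasure μ)
    (hμ : IsBernoulliHalf μ) (f : (ℕ → Bool) → ℂ) (hf : Continuous f)
    (lam : ℝ) (hlam : 1 ≤ lam) :
    (sSup {E : ℝ≥0∞ | ∃ g : (ℕ → Bool) → ℂ, AEStronglyMeasurable g μ ∧
          eLpNorm g (ENNReal.ofReal lam) μ = 1 ∧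
          E = eLpNorm (fun x => f x * g (shift x)) (ENNReal.ofReal lam) μ} ≤
        ENNReal.ofReal (⨆ x : ℕ → Bool, ‖f x‖) ∧
      ENNReal.ofReal (⨆ x : ℕ → Bool, ‖Ruelle f x‖) ≤
        sSup {E : ℝ≥0∞ | ∃ g : (ℕ → Bool) → ℂ, AEStronglyMeasurable g μ ∧
          eLpNorm g (ENNReal.ofReal lam) μ = 1 ∧
          E = eLpNorm (fun x => f x * g (shift x)) (ENNReal.ofReal lam) μ}) ∧
      ((∃ h : (ℕ → Bool) → ℂ, Continuous h ∧ f = fun x => h (shift x)) →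
        sSup {E : ℝ≥0∞ | ∃ g : (ℕ → Bool) → ℂ, AEStronglyMeasurable g μ ∧
            eLpNorm g (ENNReal.ofReal lam) μ = 1 ∧
            E = eLpNorm (fun x => f x * g (shift x)) (ENNReal.ofReal lam) μ} =
          ENNReal.ofReal (⨆ x : ℕ → Bool, ‖f x‖) ∧
        ENNReal.ofReal (⨆ x : ℕ → Bool, ‖Ruelle f x‖) =
          ENNReal.ofReal (⨆ x : ℕ → Bool, ‖f x‖)) := by
  exact stmt6' μ hprob hμ f hf lam hlam
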